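/- For a poset (S,≤), the free B-module B(S,≤) of finitely generated lower subsets is a projective B-module if and only if (S,≤) is lower finite, i.e., every principal lower set S_{≤x} = {y : y ≤ x} is finite. -/
import Mathlib


/-- Finitely generated lower subsets of a preordered set. -/
def FGLower (S : Type*) [Preorder S] : Type _ :=
  {L : LowerSet S // ∃ F : Finset S, L = lowerClosure (F : Set S)}

namespace FGLower

variable {S : Type*} [Preorder S]

instance : SemilatticeSup (FGLower S) :=
  Subtype.semilatticeSup fun L M ⟨F, hF⟩ ⟨G, hG⟩ => by
    classical
    exact ⟨F ∪ G, by simp [hF, hG, lowerClosure_union]⟩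

instance : OrderBot (FGLower S) :=
  Subtype.orderBot ⟨∅, by simp⟩

end FGLower

/-- A `𝔹`-module (join-semilattice with bottom) is projective if it is a retract of
a free `𝔹`-module, i.e. of the semilattice of finite subsets of some set. -/
def IsProjectiveB (μ : Type) [SemilatticeSup μ] [OrderBot μ] : Prop :=
  ∃ T : Type, haveI := Classical.decEq T;
    ∃ (s : SupBotHom μ (Finset T)) (r : SupBotHom (Finset T) μ), ∀ x, r (s x) = x

section aux

variable {S : Type} [PartialOrder S]

/-- principal finitely generated lower set -/
def fgPrincipal (x : S) : FGLower S :=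
  ⟨lowerClosure {x}, ⟨{x}, by simp⟩⟩

lemma fgPrincipal_injective : Function.Injective (fgPrincipal (S := S)) := by
  intro a b h
  have h1 : (lowerClosure {a} : LowerSet S) = lowerClosure {b} := congrArg Subtype.val h
  have ha : a ∈ (lowerClosure {b} : LowerSet S) := by
    rw [← h1]; exact subset_lowerClosure rfl
  have hb : b ∈ (lowerClosure {a} : LowerSet S) := by
    rw [h1]; exact subset_lowerClosure rfl
  simp only [mem_lowerClosure, Set.mem_singleton_iff, exists_eq_left] at ha hb
  exact le_antisymm ha hb

lemma fg_finite (h : ∀ x : S, {y : S | y ≤ x}.Finite) (L : FGLower S) :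
    ((L.1 : Set S)).Finite := by
  obtain ⟨F, hF⟩ := L.2
  rw [hF, coe_lowerClosure]
  exact Set.Finite.biUnion F.finite_toSet fun x _ => h x

end aux

/-- For a poset `(S,≤)`, the free `𝔹`-module `B(S,≤)` of finitely
generated lower subsets is projective iff `(S,≤)` is lower finite, i.e. every
principal lower set `{y : y ≤ x}` is finite. -/
theorem stmt3 (S : Type) [PartialOrder S] :
    IsProjectiveB (FGLower S) ↔ ∀ x : S, {y : S | y ≤ x}.Finite := by
  classical
  constructor
  · rintro ⟨T, s, r, hrs⟩ x
    have key : Function.Injective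
        (fun y : {y : S // y ≤ x} => s (fgPrincipal y.1)) := by
      intro a b h
      have h' : s (fgPrincipal a.1) = s (fgPrincipal b.1) := h
      have : fgPrincipal a.1 = fgPrincipal b.1 := by
        rw [← hrs (fgPrincipal a.1), ← hrs (fgPrincipal b.1), h']
      exact Subtype.ext (fgPrincipal_injective this)
    have hmono : ∀ y : {y : S // y ≤ x},
        s (fgPrincipal y.1) ∈ (s (fgPrincipal x)).powerset := by
      intro y
      rw [Finset.mem_powerset]
      show s (fgPrincipal y.1) ≤ s (fgPrincipal x)
      have hle : fgPrincipal y.1 ≤ fgPrincipal x := by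
          change (lowerClosure {y.1} : LowerSet S) ≤ lowerClosure {x}
          simpa using y.2
      calc s (fgPrincipal y.1) ≤ s (fgPrincipal y.1) ⊔ s (fgPrincipal x) := le_sup_left
        _ = s (fgPrincipal y.1 ⊔ fgPrincipal x) := (map_sup s _ _).symm
        _ = s (fgPrincipal x) := by rw [sup_eq_right.mpr hle]
    have : Finite {y : S // y ≤ x} := by
      have : Function.Injective (fun y : {y : S // y ≤ x} =>
          (⟨s (fgPrincipal y.1), hmono y⟩ : ((s (fgPrincipal x)).powerset : Finset (Finset T)))) := by
        intro a b h
        exact key (congrArg Subtype.val h)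
      exact Finite.of_injective _ this
    exact Set.finite_coe_iff.mp this
  · intro h
    refine ⟨S, ?_⟩
    refine ⟨⟨⟨fun L => (fg_finite h L).toFinset, ?_⟩, ?_⟩,
      ⟨⟨fun F => ⟨lowerClosure (F : Set S), F, rfl⟩, ?_⟩, ?_⟩, ?_⟩
    · intro L M
      apply Finset.coe_injective
      simp [LowerSet.coe_sup]
      rfl
    · apply Finset.coe_injective
      simp
      rfl
    · intro F G
      apply Subtype.ext
      show (lowerClosure (↑(F ∪ G) : Set S)) = lowerClosure F ⊔ lowerClosure G
      simp [lowerClosure_union]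
    · apply Subtype.ext
      show (lowerClosure (↑(∅ : Finset S) : Set S)) = ⊥
      simp
    · intro L
      apply Subtype.ext
      show lowerClosure (((fg_finite h L).toFinset : Set S)) = L.1
      rw [Set.Finite.coe_toFinset]
      exact SetLike.coe_injective ((lowerClosure_eq).mpr L.1.lower)
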